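/- Let N_{n,k} denote the Lucas-Narayana numbers in the fraction field K of ℤ[s,t]. For all integers n and k with 2 ≤ k ≤ n-1, the recursion N_{n,k} = ({k}·{n-1}/{n-k})·N_{n-1,k} + t·({n-k}·{n-1}/{k})·N_{n-1,k-1} holds. -/

import Mathlib

/-
Both sides are multiples of N_{n-1,k}. Comparing each Lucasnomial with its neighbours gives
N_{n,k}·{n-k}{n-k+1} = {n}{n-1}·N_{n-1,k} and N_{n-1,k}·{k}{k-1} = {n-k}{n-k+1}·N_{n-1,k-1},
after which the recursion is the addition formula {a+b+1} = {a+1}{b+1} + t{a}{b} for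
a = k-1, b = n-k.
-/

open MvPolynomial

/-- The polynomial ring ℤ[s,t] (s = X 0, t = X 1). -/
abbrev R := MvPolynomial (Fin 2) ℤ

/-- The fraction field of ℤ[s,t]. -/
abbrev K := FractionRing R

/-- The generalized Lucas polynomials: {0} = 0, {1} = 1, {n} = s·{n-1} + t·{n-2}. -/
noncomputable def lucas : ℕ → R
  | 0 => 0
  | 1 => 1
  | n + 2 => X 0 * lucas (n + 1) + X 1 * lucas n

/-- The Lucastorial {n}! = {n}·{n-1}⋯{2}·{1}, with {0}! = 1. -/
noncomputable def lucasFact : ℕ → R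
  | 0 => 1
  | n + 1 => lucas (n + 1) * lucasFact n

/-- The Lucasnomial {n choose k} = {n}!/({k}!·{n-k}!) as an element of K. -/
noncomputable def lucasBinom (n k : ℕ) : K :=
  algebraMap R K (lucasFact n) /
    (algebraMap R K (lucasFact k) * algebraMap R K (lucasFact (n - k)))

/-- The Lucas-Narayana number N_{n,k} = (1/{n})·{n choose k}·{n choose k-1} in K. -/
noncomputable def lucasNarayana (n k : ℕ) : K :=
  (algebraMap R K (lucas n))⁻¹ * lucasBinom n k * lucasBinom n (k - 1)

local notation "⟪" n "⟫" => algebraMap R K (lucas n)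

theorem lucas_add_add_one (a b : ℕ) :
    lucas (a + b + 1) = lucas (a + 1) * lucas (b + 1) + X 1 * lucas a * lucas b := by
  induction b using Nat.twoStepInduction with
  | zero => simp [lucas]
  | one => simp only [lucas]; ring
  | more b ih₀ ih₁ =>
    calc lucas (a + (b + 2) + 1)
        = X 0 * lucas (a + (b + 1) + 1) + X 1 * lucas (a + b + 1) := rfl
      _ = lucas (a + 1) * lucas (b + 2 + 1) + X 1 * lucas a * lucas (b + 2) := by
        rw [ih₀, ih₁]; simp only [lucas]; ring

theorem eval_lucas_succ (m : ℕ) : eval ![1, 0] (lucas (m + 1)) = 1 := by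
  induction m using Nat.twoStepInduction with
  | zero => simp [lucas]
  | one => simp [lucas]
  | more m _ ih => rw [lucas.eq_3]; simp [ih]

theorem lucas_ne_zero {m : ℕ} (hm : m ≠ 0) : lucas m ≠ 0 := by
  obtain ⟨m, rfl⟩ := Nat.exists_eq_succ_of_ne_zero hm
  intro h
  simpa [h] using eval_lucas_succ m

theorem lucasFact_ne_zero (m : ℕ) : lucasFact m ≠ 0 := by
  induction m with
  | zero => simp [lucasFact]
  | succ m ih => exact mul_ne_zero (lucas_ne_zero m.succ_ne_zero) ih

theorem algebraMap_lucas_ne_zero {m : ℕ} (hm : m ≠ 0) : ⟪m⟫ ≠ 0 :=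
  IsFractionRing.to_map_ne_zero_of_mem_nonZeroDivisors
    (mem_nonZeroDivisors_of_ne_zero (lucas_ne_zero hm))

theorem algebraMap_lucas_succ_ne_zero (m : ℕ) : ⟪m + 1⟫ ≠ 0 :=
  algebraMap_lucas_ne_zero m.succ_ne_zero

theorem algebraMap_lucasFact_ne_zero (m : ℕ) : algebraMap R K (lucasFact m) ≠ 0 :=
  IsFractionRing.to_map_ne_zero_of_mem_nonZeroDivisors
    (mem_nonZeroDivisors_of_ne_zero (lucasFact_ne_zero m))

theorem algebraMap_lucasFact_succ (m : ℕ) :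
    algebraMap R K (lucasFact (m + 1)) = ⟪m + 1⟫ * algebraMap R K (lucasFact m) :=
  map_mul _ _ _

theorem lucasBinom_succ_left_mul {m k : ℕ} (hk : k ≤ m) :
    lucasBinom (m + 1) k * ⟪m + 1 - k⟫ = ⟪m + 1⟫ * lucasBinom m k := by
  rw [lucasBinom, lucasBinom, Nat.succ_sub hk, algebraMap_lucasFact_succ,
    algebraMap_lucasFact_succ]
  field_simp [algebraMap_lucasFact_ne_zero, algebraMap_lucas_succ_ne_zero (m - k)]

theorem lucasBinom_succ_right_mul {m k : ℕ} (hk : k < m) :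
    lucasBinom m (k + 1) * ⟪k + 1⟫ = ⟪m - k⟫ * lucasBinom m k := by
  obtain ⟨d, rfl⟩ := Nat.exists_eq_add_of_lt hk
  rw [lucasBinom, lucasBinom, show k + d + 1 - k = d + 1 by omega,
    show k + d + 1 - (k + 1) = d by omega]
  simp only [algebraMap_lucasFact_succ]
  field_simp [algebraMap_lucasFact_ne_zero, algebraMap_lucas_succ_ne_zero k,
    algebraMap_lucas_succ_ne_zero d]

theorem lucasNarayana_succ_left_mul {m k : ℕ} (hk : k < m) :
    lucasNarayana (m + 1) (k + 1) * (⟪m - k⟫ * ⟪m + 1 - k⟫) =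
      ⟪m + 1⟫ * ⟪m⟫ * lucasNarayana m (k + 1) := by
  have h₁ := lucasBinom_succ_left_mul hk
  have h₂ := lucasBinom_succ_left_mul hk.le
  rw [Nat.add_sub_add_right] at h₁
  simp only [lucasNarayana, Nat.add_sub_cancel]
  have hm₁ := algebraMap_lucas_succ_ne_zero m
  have hm : ⟪m⟫ ≠ 0 := algebraMap_lucas_ne_zero (by omega)
  field_simp
  linear_combination
    lucasBinom (m + 1) k * ⟪m + 1 - k⟫ * h₁ + ⟪m + 1⟫ * lucasBinom m (k + 1) * h₂

theorem lucasNarayana_succ_right_mul {m k : ℕ} (hk : k + 1 < m) :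
    lucasNarayana m (k + 2) * (⟪k + 2⟫ * ⟪k + 1⟫) =
      ⟪m - (k + 1)⟫ * ⟪m - k⟫ * lucasNarayana m (k + 1) := by
  have h₁ := lucasBinom_succ_right_mul hk
  have h₂ := lucasBinom_succ_right_mul (Nat.lt_of_succ_lt hk)
  rw [show k + 1 + 1 = k + 2 from rfl] at h₁
  simp only [lucasNarayana, Nat.add_succ_sub_one, Nat.add_sub_cancel]
  linear_combination ⟪m⟫⁻¹ * lucasBinom m (k + 1) * (⟪k + 1⟫ * h₁ + ⟪m - (k + 1)⟫ * h₂)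

/-- For 2 ≤ k ≤ n-1, the Lucas-Narayana numbers satisfy
N_{n,k} = ({k}·{n-1}/{n-k})·N_{n-1,k} + t·({n-k}·{n-1}/{k})·N_{n-1,k-1}. -/
theorem lucasNarayana_rec (n k : ℕ) (h2 : 2 ≤ k) (hk : k ≤ n - 1) :
    lucasNarayana n k =
      algebraMap R K (lucas k) * algebraMap R K (lucas (n - 1)) /
          algebraMap R K (lucas (n - k)) * lucasNarayana (n - 1) k
        + algebraMap R K (X 1) *
          (algebraMap R K (lucas (n - k)) * algebraMap R K (lucas (n - 1)) /
            algebraMap R K (lucas k)) * lucasNarayana (n - 1) (k - 1) := by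
  obtain ⟨i, rfl⟩ := Nat.exists_eq_add_of_le' h2
  obtain ⟨m, rfl⟩ : ∃ m, n = m + 1 := ⟨n - 1, by omega⟩
  have hmk : m + 1 - (i + 2) = m - (i + 1) := by omega
  simp only [Nat.add_sub_cancel, Nat.add_succ_sub_one, hmk]
  have hadd :
      ⟪m + 1⟫ = ⟪i + 2⟫ * ⟪m - i⟫ + algebraMap R K (X 1) * ⟪i + 1⟫ * ⟪m - (i + 1)⟫ := by
    have h := lucas_add_add_one (i + 1) (m - (i + 1))
    rw [show i + 1 + (m - (i + 1)) + 1 = m + 1 by omega,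
      show m - (i + 1) + 1 = m - i by omega] at h
    simp only [h, map_add, map_mul]
  have hleft := lucasNarayana_succ_left_mul (show i + 1 < m by omega)
  have hright := lucasNarayana_succ_right_mul (show i + 1 < m by omega)
  rw [show m + 1 - (i + 1) = m - i by omega] at hleft
  have ha : ⟪m - (i + 1)⟫ ≠ 0 := algebraMap_lucas_ne_zero (by omega)
  have hb : ⟪m - i⟫ ≠ 0 := algebraMap_lucas_ne_zero (by omega)
  rw [← eq_div_iff (mul_ne_zero ha hb)] at hleft
  rw [hleft]
  field_simp [algebraMap_lucas_succ_ne_zero (i + 1)]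
  linear_combination ⟪i + 2⟫ * ⟪m⟫ * lucasNarayana m (i + 2) * hadd
    + algebraMap R K (X 1) * ⟪m - (i + 1)⟫ * ⟪m⟫ * hright
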